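/- Let B ⊆ ℝⁿ be a compact set, let m be a finite Borel measure on ℝⁿ whose support equals B (every open set meeting B has positive m-measure), and let T : ℝⁿ → ℝ^M be a polynomial map with components T₁,…,T_M such that 0 lies in the convex hull of T(B). For an integer k ≥ 0 let Q_k = {λ ∈ ℝ^M : for every real polynomial a in n variables of total degree at most k, ∫_B (1 + ∑ᵢ λᵢTᵢ(x))·a(x)² dm(x) ≥ 0}, and let Q_k° = {y ∈ ℝ^M : ⟨λ, y⟩ ≥ −1 for all λ ∈ Q_k}. Then the convex hull of T(B) equals the closure of ⋃_{k≥0} Q_k°. -/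

import Mathlib

open MeasureTheory MvPolynomial

/-- The `k`-th relaxation `Q_k`: those `l ∈ ℝ^M` with
`∫_B (1 + ∑ᵢ lᵢ Tᵢ(x)) a(x)² dm(x) ≥ 0` for every polynomial `a` of degree at most `k`. -/
def Qset {n M : ℕ} (B : Set (Fin n → ℝ)) (μ : Measure (Fin n → ℝ))
    (T : Fin M → MvPolynomial (Fin n) ℝ) (k : ℕ) : Set (Fin M → ℝ) :=
  {l | ∀ a : MvPolynomial (Fin n) ℝ, a.totalDegree ≤ k →
    0 ≤ ∫ x in B, (1 + ∑ i, l i * eval x (T i)) * (eval x a) ^ 2 ∂μ}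

/-- The polar of a subset `S ⊆ ℝ^M`: all `y` with `⟨s, y⟩ ≥ −1` for every `s ∈ S`. -/
def polarSet {M : ℕ} (S : Set (Fin M → ℝ)) : Set (Fin M → ℝ) :=
  {y | ∀ l ∈ S, -1 ≤ ∑ i, l i * y i}

/-!
Both sides are closed convex sets containing `0` (the hull is compact by Carathéodory's
theorem), so by the bipolar theorem it suffices to compare their polars.  The polar of the
increasing union `⋃ₖ Q_k°` is `⋂ₖ Q_k`, because each `Q_k` is itself closed, convex and contains
`0`; the polar of `conv T(B)` is `T(B)°`, the set of `λ` with `1 + ⟨λ, T⟩ ≥ 0` on `B`.  It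
remains to see `⋂ₖ Q_k ⊆ T(B)°`.  If `λ ∈ Q_k` for all `k`, then `∫_B f g² dm ≥ 0` for
`f = 1 + ⟨λ, T⟩` and every continuous `g`, because polynomials approximate `g` uniformly on `B`
(Stone–Weierstrass).  For `g = max (-f) 0` this reads `-∫_B g³ dm ≥ 0`, so `g` vanishes on `B`,
i.e. `f ≥ 0` on `B`, since `m` charges every open set meeting `B`.
-/

open Filter Topology

attribute [local fun_prop] MvPolynomial.continuous_eval

theorem convexHull_eq_iUnion_image_stdSimplex {E : Type*} [AddCommGroup E] [Module ℝ E]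
    [FiniteDimensional ℝ E] (s : Set E) :
    convexHull ℝ s = ⋃ d : Fin (Module.finrank ℝ E + 2),
      (fun p : (Fin d → ℝ) × (Fin d → E) => ∑ i, p.1 i • p.2 i) ''
        (stdSimplex ℝ (Fin d) ×ˢ Set.univ.pi fun _ => s) := by
  refine subset_antisymm (fun x hx => ?_) <| Set.iUnion_subset fun d => ?_
  · obtain ⟨ι, _, z, w, hzs, hz, hw0, hw1, rfl⟩ := eq_pos_convex_span_of_mem_convexHull hx
    have hcard : Fintype.card ι < Module.finrank ℝ E + 2 := by
      rcases isEmpty_or_nonempty ι with _ | _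
      · simp
      · have := hz.card_le_finrank_succ
        have := Submodule.finrank_le (vectorSpan ℝ (Set.range z))
        omega
    let e := Fintype.equivFin ι
    refine Set.mem_iUnion.2 ⟨⟨_, hcard⟩, (w ∘ e.symm, z ∘ e.symm), ⟨⟨fun j => (hw0 _).le, ?_⟩,
      fun j _ => hzs ⟨_, rfl⟩⟩, ?_⟩
    · simpa [Function.comp_def] using (e.symm.sum_comp w).trans hw1
    · exact e.symm.sum_comp fun i => w i • z i
  · rintro _ ⟨⟨w, z⟩, ⟨⟨hw0, hw1⟩, hz⟩, rfl⟩
    exact (convex_convexHull ℝ s).sum_mem (fun i _ => hw0 i) hw1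
      fun i _ => subset_convexHull ℝ s (hz i (Set.mem_univ i))

theorem IsCompact.convexHull {E : Type*} [NormedAddCommGroup E] [NormedSpace ℝ E]
    [FiniteDimensional ℝ E] {s : Set E} (hs : IsCompact s) : IsCompact (convexHull ℝ s) := by
  rw [convexHull_eq_iUnion_image_stdSimplex]
  exact isCompact_iUnion fun d =>
    ((isCompact_stdSimplex _ _).prod (isCompact_univ_pi fun _ => hs)).image (by fun_prop)

section Halfspace

variable {ι : Type*} [Fintype ι]

theorem convex_setOf_le_dotProduct (r : ℝ) (w : ι → ℝ) : Convex ℝ {l : ι → ℝ | r ≤ l ⬝ᵥ w} :=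
  convex_halfSpace_ge ⟨fun x y => add_dotProduct x y w, fun c x => smul_dotProduct c x w⟩ r

theorem isClosed_setOf_le_dotProduct (r : ℝ) (w : ι → ℝ) :
    IsClosed {l : ι → ℝ | r ≤ l ⬝ᵥ w} :=
  isClosed_le continuous_const (continuous_id.dotProduct continuous_const)

end Halfspace

section Polar

variable {M : ℕ}

theorem mem_polarSet {S : Set (Fin M → ℝ)} {y : Fin M → ℝ} :
    y ∈ polarSet S ↔ ∀ l ∈ S, -1 ≤ l ⬝ᵥ y :=
  Iff.rfl

theorem polarSet_eq_biInter (S : Set (Fin M → ℝ)) :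
    polarSet S = ⋂ l ∈ S, {y | -1 ≤ y ⬝ᵥ l} := by
  ext y
  simp only [mem_polarSet, Set.mem_iInter₂, Set.mem_ofPred_eq, dotProduct_comm y]

theorem polarSet_antitone : Antitone (polarSet (M := M)) :=
  fun _ _ h _ hy l hl => hy l (h hl)

theorem zero_mem_polarSet (S : Set (Fin M → ℝ)) : 0 ∈ polarSet S :=
  fun l _ => by simp

theorem convex_polarSet (S : Set (Fin M → ℝ)) : Convex ℝ (polarSet S) := by
  rw [polarSet_eq_biInter]
  exact convex_iInter₂ fun l _ => convex_setOf_le_dotProduct _ l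

theorem polarSet_iUnion {ι : Sort*} (S : ι → Set (Fin M → ℝ)) :
    polarSet (⋃ i, S i) = ⋂ i, polarSet (S i) := by
  ext y
  simp only [polarSet, Set.mem_iUnion, Set.mem_iInter, Set.mem_ofPred_eq]
  exact ⟨fun h i l hl => h l ⟨i, hl⟩, fun h l ⟨i, hl⟩ => h i l hl⟩

theorem polarSet_closure (S : Set (Fin M → ℝ)) : polarSet (closure S) = polarSet S :=
  (polarSet_antitone subset_closure).antisymm fun y hy =>
    closure_minimal hy (isClosed_setOf_le_dotProduct (-1) y)

theorem polarSet_convexHull (S : Set (Fin M → ℝ)) :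
    polarSet (convexHull ℝ S) = polarSet S :=
  (polarSet_antitone (subset_convexHull ℝ S)).antisymm fun y hy =>
    convexHull_min hy (convex_setOf_le_dotProduct (-1) y)

theorem exists_mem_polarSet_dotProduct_lt {Q : Set (Fin M → ℝ)} (hQ : Convex ℝ Q)
    (hQc : IsClosed Q) (h0 : 0 ∈ Q) {m : Fin M → ℝ} (hm : m ∉ Q) :
    ∃ v ∈ polarSet Q, m ⬝ᵥ v < -1 := by
  obtain ⟨f, u, hfQ, hfm⟩ := geometric_hahn_banach_closed_point hQ hQc hm
  have hu : 0 < u := by simpa using hfQ 0 h0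
  set w : Fin M → ℝ := fun i => f fun j => if i = j then 1 else 0
  have hf : ∀ x, f x = x ⬝ᵥ w := fun x => by
    simpa [dotProduct, w] using (f : (Fin M → ℝ) →ₗ[ℝ] ℝ).pi_apply_eq_sum_univ x
  refine ⟨-u⁻¹ • w, fun q hq => ?_, ?_⟩
  · show -1 ≤ q ⬝ᵥ (-u⁻¹ • w)
    rw [dotProduct_smul, smul_eq_mul, ← hf, neg_mul, neg_le_neg_iff, inv_mul_le_one₀ hu]
    exact (hfQ q hq).le
  · rw [dotProduct_smul, smul_eq_mul, ← hf, neg_mul, neg_lt_neg_iff, one_lt_inv_mul₀ hu]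
    exact hfm

theorem polarSet_polarSet {Q : Set (Fin M → ℝ)} (hQ : Convex ℝ Q) (hQc : IsClosed Q)
    (h0 : 0 ∈ Q) : polarSet (polarSet Q) = Q := by
  refine subset_antisymm (fun m hm => ?_) fun q hq v hv => ?_
  · by_contra hmQ
    obtain ⟨v, hv, hmv⟩ := exists_mem_polarSet_dotProduct_lt hQ hQc h0 hmQ
    exact hmv.not_ge (dotProduct_comm m v ▸ hm v hv)
  · exact (dotProduct_comm q v ▸ hv q hq : -1 ≤ v ⬝ᵥ q)

end Polar

theorem exists_mvPolynomial_near {σ : Type*} {B : Set (σ → ℝ)} (hB : IsCompact B)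
    {g : (σ → ℝ) → ℝ} (hg : ContinuousOn g B) {ε : ℝ} (hε : 0 < ε) :
    ∃ p : MvPolynomial σ ℝ, ∀ x ∈ B, |eval x p - g x| < ε := by
  have := isCompact_iff_compactSpace.mp hB
  let coord : σ → C(B, ℝ) := fun i =>
    ⟨fun x => (x : σ → ℝ) i, (continuous_apply i).comp continuous_subtype_val⟩
  have heval : ∀ p (x : B), aeval coord p x = eval (x : σ → ℝ) p := fun p x => by
    have := congrArg (· p) (comp_aeval coord (ContinuousMap.evalAlgHom ℝ ℝ x))
    simp only [AlgHom.comp_apply, ContinuousMap.evalAlgHom_apply] at this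
    exact this
  have hsep : (aeval (R := ℝ) coord).range.SeparatesPoints := by
    intro x y hxy
    obtain ⟨i, hi⟩ := Function.ne_iff.mp (Subtype.coe_injective.ne hxy)
    exact ⟨coord i, ⟨coord i, ⟨X i, aeval_X coord i⟩, rfl⟩, hi⟩
  obtain ⟨⟨_, p, rfl⟩, hp⟩ :=
    ContinuousMap.exists_mem_subalgebra_near_continuous_of_separatesPoints _ hsep _
      hg.domRestrict ε hε
  exact ⟨p, fun x hx => by simpa [heval] using hp ⟨x, hx⟩⟩

theorem setIntegral_mul_sq_nonneg_of_forall_mvPolynomial {σ : Type*} [Countable σ]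
    {B : Set (σ → ℝ)} (hB : IsCompact B) {μ : Measure (σ → ℝ)} [IsFiniteMeasureOnCompacts μ]
    {f g : (σ → ℝ) → ℝ} (hf : ContinuousOn f B) (hg : ContinuousOn g B)
    (h : ∀ p : MvPolynomial σ ℝ, 0 ≤ ∫ x in B, f x * eval x p ^ 2 ∂μ) :
    0 ≤ ∫ x in B, f x * g x ^ 2 ∂μ := by
  choose p hp using fun j : ℕ => exists_mvPolynomial_near hB hg (Nat.one_div_pos_of_nat (n := j))
  obtain ⟨Cf, hCf⟩ := hB.exists_bound_of_continuousOn hf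
  obtain ⟨Cg, hCg⟩ := hB.exists_bound_of_continuousOn hg
  have hp_le : ∀ j, ∀ x ∈ B, ‖eval x (p j)‖ ≤ Cg + 1 := fun j x hx => by
    have hpg := hp j x hx
    have hgx := hCg x hx
    have hj : 1 / ((j : ℝ) + 1) ≤ 1 := div_le_one_of_le₀ (by simp) (by positivity)
    rw [Real.norm_eq_abs] at hgx ⊢
    linarith [abs_sub_abs_le_abs_sub (eval x (p j)) (g x)]
  have hp_lim : ∀ x ∈ B, Tendsto (fun j => eval x (p j)) atTop (𝓝 (g x)) := fun x hx =>
    tendsto_iff_dist_tendsto_zero.2 <| squeeze_zero (fun _ => dist_nonneg)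
      (fun j => (hp j x hx).le) tendsto_one_div_add_atTop_nhds_zero_nat
  refine ge_of_tendsto' (tendsto_integral_of_dominated_convergence (fun _ => Cf * (Cg + 1) ^ 2)
    (fun j => ?_) (integrableOn_const hB.measure_lt_top.ne) (fun j => ?_) ?_) fun j => h (p j)
  · exact (hf.mul ((continuous_eval _).continuousOn.pow 2)).aestronglyMeasurable hB.measurableSet
  · refine ae_restrict_of_forall_mem hB.measurableSet fun x hx => ?_
    rw [norm_mul, norm_pow]
    exact mul_le_mul (hCf x hx) (pow_le_pow_left₀ (norm_nonneg _) (hp_le j x hx) 2)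
      (by positivity) ((norm_nonneg _).trans (hCf x hx))
  · exact ae_restrict_of_forall_mem hB.measurableSet fun x hx =>
      ((hp_lim x hx).pow 2).const_mul (f x)

theorem setIntegral_pos_of_continuous_nonneg_of_ne_zero {X : Type*} [TopologicalSpace X]
    [MeasurableSpace X] {μ : Measure X} {B : Set X} (hμB : μ Bᶜ = 0)
    (hsupp : ∀ U : Set X, IsOpen U → (U ∩ B).Nonempty → 0 < μ U) {F : X → ℝ}
    (hF : Continuous F) (hF0 : 0 ≤ F) (hFB : IntegrableOn F B μ) {x₀ : X} (hx₀ : x₀ ∈ B)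
    (hFx₀ : F x₀ ≠ 0) : 0 < ∫ x in B, F x ∂μ := by
  rw [setIntegral_pos_iff_support_of_nonneg_ae (.of_forall hF0) hFB, measure_inter_conull hμB]
  exact hsupp _ hF.isOpen_support ⟨x₀, hFx₀, hx₀⟩

section Relaxation

variable {n M : ℕ} {B : Set (Fin n → ℝ)} {μ : Measure (Fin n → ℝ)}
  {T : Fin M → MvPolynomial (Fin n) ℝ}

theorem Qset_antitone : Antitone (Qset B μ T) :=
  fun _ _ hk _ hl a ha => hl a (ha.trans hk)

theorem zero_mem_Qset (k : ℕ) : 0 ∈ Qset B μ T k :=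
  fun a _ => integral_nonneg fun x => by simp [sq_nonneg]

theorem setIntegral_one_add_dotProduct_mul_sq (hB : IsCompact B) [IsFiniteMeasureOnCompacts μ]
    (l : Fin M → ℝ) (a : MvPolynomial (Fin n) ℝ) :
    ∫ x in B, (1 + ∑ i, l i * eval x (T i)) * eval x a ^ 2 ∂μ =
      ∫ x in B, eval x a ^ 2 ∂μ + l ⬝ᵥ fun i => ∫ x in B, eval x (T i) * eval x a ^ 2 ∂μ := by
  have hint {F : (Fin n → ℝ) → ℝ} (hF : Continuous F) : IntegrableOn F B μ :=
    hF.continuousOn.integrableOn_compact hB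
  simp_rw [add_mul, one_mul, Finset.sum_mul, mul_assoc]
  rw [integral_add (hint (by fun_prop)) (integrable_finsetSum _ fun i _ => hint (by fun_prop)),
    integral_finsetSum _ fun i _ => hint (by fun_prop)]
  simp [integral_const_mul, dotProduct]

theorem Qset_eq_iInter (hB : IsCompact B) [IsFiniteMeasureOnCompacts μ] (k : ℕ) :
    Qset B μ T k = ⋂ a : {a : MvPolynomial (Fin n) ℝ // a.totalDegree ≤ k},
      {l | -∫ x in B, eval x a.1 ^ 2 ∂μ ≤
        l ⬝ᵥ fun i => ∫ x in B, eval x (T i) * eval x a.1 ^ 2 ∂μ} := by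
  ext l
  simp [Qset, setIntegral_one_add_dotProduct_mul_sq hB, neg_le_iff_add_nonneg']

theorem isClosed_Qset (hB : IsCompact B) [IsFiniteMeasureOnCompacts μ] (k : ℕ) :
    IsClosed (Qset B μ T k) := by
  rw [Qset_eq_iInter hB]
  exact isClosed_iInter fun _ => isClosed_setOf_le_dotProduct _ _

theorem convex_Qset (hB : IsCompact B) [IsFiniteMeasureOnCompacts μ] (k : ℕ) :
    Convex ℝ (Qset B μ T k) := by
  rw [Qset_eq_iInter hB]
  exact convex_iInter fun _ => convex_setOf_le_dotProduct _ _

theorem polarSet_image_subset_Qset (hB : MeasurableSet B) (k : ℕ) :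
    polarSet ((fun x i => eval x (T i)) '' B) ⊆ Qset B μ T k := by
  intro l hl a _
  refine setIntegral_nonneg hB fun x hx => mul_nonneg ?_ (sq_nonneg _)
  have hx : -1 ≤ (fun i => eval x (T i)) ⬝ᵥ l := hl _ ⟨x, hx, rfl⟩
  rw [dotProduct_comm] at hx
  exact neg_le_iff_add_nonneg'.1 hx

theorem iInter_Qset_subset_polarSet_image (hB : IsCompact B) [IsFiniteMeasureOnCompacts μ]
    (hμB : μ Bᶜ = 0) (hsupp : ∀ U : Set (Fin n → ℝ), IsOpen U → (U ∩ B).Nonempty → 0 < μ U) :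
    ⋂ k, Qset B μ T k ⊆ polarSet ((fun x i => eval x (T i)) '' B) := by
  rintro l hl _ ⟨x₀, hx₀, rfl⟩
  set f : (Fin n → ℝ) → ℝ := fun x => 1 + ∑ i, l i * eval x (T i)
  set g : (Fin n → ℝ) → ℝ := fun x => max (-f x) 0
  have hf : Continuous f := by fun_prop
  have hg : Continuous g := by fun_prop
  have hfg : ∀ x, f x * g x ^ 2 = -g x ^ 3 := fun x => by
    rcases le_total 0 (f x) with h | h
    · simp [g, h]
    · simp only [g, max_eq_left (neg_nonneg.2 h)]; ring
  have hnonneg : 0 ≤ ∫ x in B, f x * g x ^ 2 ∂μ :=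
    setIntegral_mul_sq_nonneg_of_forall_mvPolynomial hB hf.continuousOn hg.continuousOn
      fun p => Set.mem_iInter.1 hl p.totalDegree p le_rfl
  by_contra hneg
  have hfx₀ : f x₀ < 0 := by
    have : ∑ i, l i * eval x₀ (T i) < -1 := by simpa [mul_comm] using hneg
    linarith
  have hpos : 0 < ∫ x in B, g x ^ 3 ∂μ :=
    setIntegral_pos_of_continuous_nonneg_of_ne_zero hμB hsupp (hg.pow 3)
      (fun x => pow_nonneg (le_max_right _ _) 3) ((hg.pow 3).continuousOn.integrableOn_compact hB)
      hx₀ (pow_ne_zero 3 (lt_max_of_lt_left (neg_pos.2 hfx₀)).ne')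
  simp only [hfg, integral_neg] at hnonneg
  linarith

end Relaxation

/-- Let `B ⊆ ℝⁿ` be compact, `m` a finite Borel measure supported exactly on `B`, and
`T : ℝⁿ → ℝ^M` a polynomial map with `0` in the convex hull of `T(B)`.  Then the convex
hull of `T(B)` equals the closure of `⋃ₖ Q_k°`. -/
theorem convexHull_eq_closure_union_polars {n M : ℕ}
    (B : Set (Fin n → ℝ)) (hB : IsCompact B)
    (μ : Measure (Fin n → ℝ)) [IsFiniteMeasure μ]
    (hμB : μ Bᶜ = 0)
    (hsupp : ∀ U : Set (Fin n → ℝ), IsOpen U → (U ∩ B).Nonempty → 0 < μ U)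
    (T : Fin M → MvPolynomial (Fin n) ℝ)
    (h0 : (0 : Fin M → ℝ) ∈ convexHull ℝ ((fun x i => eval x (T i)) '' B)) :
    convexHull ℝ ((fun (x : Fin n → ℝ) (i : Fin M) => eval x (T i)) '' B) =
      closure (⋃ k : ℕ, polarSet (Qset B μ T k)) := by
  set K := convexHull ℝ ((fun (x : Fin n → ℝ) (i : Fin M) => eval x (T i)) '' B)
  set U := ⋃ k : ℕ, polarSet (Qset B μ T k)
  have hK : IsCompact K := (hB.image (by fun_prop)).convexHull
  have hU : Convex ℝ (closure U) :=
    (Directed.convex_iUnion (polarSet_antitone.comp Qset_antitone).directed_le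
      fun k => convex_polarSet _).closure
  have hQ (k : ℕ) : polarSet (polarSet (Qset B μ T k)) = Qset B μ T k :=
    polarSet_polarSet (convex_Qset hB k) (isClosed_Qset hB k) (zero_mem_Qset k)
  have hInter : ⋂ k, Qset B μ T k = polarSet ((fun x i => eval x (T i)) '' B) :=
    (iInter_Qset_subset_polarSet_image hB hμB hsupp).antisymm
      (Set.subset_iInter fun k => polarSet_image_subset_Qset hB.measurableSet k)
  calc K = polarSet (polarSet K) := (polarSet_polarSet (convex_convexHull ℝ _) hK.isClosed h0).symm
    _ = polarSet (⋂ k, Qset B μ T k) := by rw [polarSet_convexHull, hInter]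
    _ = polarSet (polarSet U) := by simp_rw [U, polarSet_iUnion, hQ]
    _ = polarSet (polarSet (closure U)) := by rw [polarSet_closure]
    _ = closure U := polarSet_polarSet hU isClosed_closure
      (subset_closure (Set.mem_iUnion.2 ⟨0, zero_mem_polarSet _⟩))
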